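/- For every real number z with 0 ≤ z < 1, the series P(z) = ∑_{n=0}^∞ zⁿ · S(n) converges and equals (1−z)^{−1/2} · ∑_{n=0}^∞ (z/108)ⁿ · C(2n, n)² · C(3n, n), where on the right-hand side C(m, k) is the usual integer binomial coefficient. -/

import Mathlib

open Finset
/-- Generalized binomial coefficient `C(x, k) = x(x-1)⋯(x-k+1)/k!`. -/
noncomputable def genBinom (x : ℝ) (k : ℕ) : ℝ :=
  (∏ i ∈ Finset.range k, (x - i)) / (Nat.factorial k)

/-- `S n = ∑_{k=0}^n C(-1/3,k) C(-2/3,n-k) C(-1/6,k) C(-5/6,n-k)`. -/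
noncomputable def S (n : ℕ) : ℝ :=
  ∑ k ∈ Finset.range (n + 1),
    genBinom (-1/3) k * genBinom (-2/3) (n - k) *
      genBinom (-1/6) k * genBinom (-5/6) (n - k)

lemma genBinom_zero (x : ℝ) : genBinom x 0 = 1 := by simp [genBinom]

lemma genBinom_succ (x : ℝ) (k : ℕ) :
    genBinom x (k+1) = genBinom x k * (x - k) / ((k:ℝ)+1) := by
  unfold genBinom
  rw [Finset.prod_range_succ, Nat.factorial_succ]
  have h1 : ((k:ℝ)+1) ≠ 0 := by positivity
  have h2 : ((Nat.factorial k : ℕ):ℝ) ≠ 0 := by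
    exact_mod_cast Nat.factorial_ne_zero k
  push_cast
  field_simp

noncomputable def Ac (k : ℕ) : ℝ := genBinom (-1/3) k * genBinom (-1/6) k
noncomputable def Bc (m : ℕ) : ℝ := genBinom (-2/3) m * genBinom (-5/6) m
noncomputable def hh (k : ℕ) : ℝ := (-1)^k * genBinom (-1/2) k

lemma Ac_zero : Ac 0 = 1 := by simp [Ac, genBinom_zero]
lemma Bc_zero : Bc 0 = 1 := by simp [Bc, genBinom_zero]
lemma hh_zero : hh 0 = 1 := by simp [hh, genBinom_zero]

lemma Ac_succ (k : ℕ) :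
    Ac (k+1) = Ac k * ((3*(k:ℝ)+1)*(6*(k:ℝ)+1)/(18*((k:ℝ)+1)^2)) := by
  unfold Ac
  rw [genBinom_succ, genBinom_succ]
  have : ((k:ℝ)+1) ≠ 0 := by positivity
  field_simp
  ring

lemma Bc_succ (m : ℕ) :
    Bc (m+1) = Bc m * ((3*(m:ℝ)+2)*(6*(m:ℝ)+5)/(18*((m:ℝ)+1)^2)) := by
  unfold Bc
  rw [genBinom_succ, genBinom_succ]
  have : ((m:ℝ)+1) ≠ 0 := by positivity
  field_simp
  ring

lemma hh_succ (k : ℕ) :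
    hh (k+1) = hh k * ((2*(k:ℝ)+1)/(2*((k:ℝ)+1))) := by
  unfold hh
  rw [genBinom_succ, pow_succ]
  have : ((k:ℝ)+1) ≠ 0 := by positivity
  field_simp
  ring

lemma Ac_pos (k : ℕ) : 0 < Ac k := by
  induction k with
  | zero => rw [Ac_zero]; norm_num
  | succ k ih =>
    rw [Ac_succ]
    have hk : (0:ℝ) ≤ k := Nat.cast_nonneg k
    positivity

lemma hh_pos (k : ℕ) : 0 < hh k := by
  induction k with
  | zero => rw [hh_zero]; norm_num
  | succ k ih =>
    rw [hh_succ]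
    have hk : (0:ℝ) ≤ k := Nat.cast_nonneg k
    positivity

lemma hh_le_one (k : ℕ) : hh k ≤ 1 := by
  induction k with
  | zero => rw [hh_zero]
  | succ k ih =>
    rw [hh_succ]
    have hk : (0:ℝ) ≤ k := Nat.cast_nonneg k
    have h2 : (2*(k:ℝ)+1)/(2*((k:ℝ)+1)) ≤ 1 := by
      rw [div_le_one (by positivity)]; linarith
    calc hh k * ((2*(k:ℝ)+1)/(2*((k:ℝ)+1))) ≤ 1 * 1 :=
          mul_le_mul ih h2 (by positivity) (by norm_num)
      _ = 1 := by norm_num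
section WZ
open Finset

lemma lin_sub_ne (n k : ℕ) (hk : k ≤ n) {a c : ℝ} (h0 : 0 < c) (hc : c < a) :
    a*(n:ℝ) - a*((k:ℝ)+1) + (a - c) ≠ 0 := by
  rcases eq_or_lt_of_le hk with h | h
  · subst h; intro hcon; nlinarith
  · have h1 : (k:ℝ) + 1 ≤ (n:ℝ) := by exact_mod_cast h
    intro hcon; nlinarith

noncomputable def HV (n k : ℕ) : ℝ :=
  (k:ℝ) * (2*(k:ℝ) - 2*(n:ℝ) - 1) / (((n:ℝ)+1) * (2*(n:ℝ) - 2*(k:ℝ) + 1)) *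
    (hh k * hh (n+1-k))

lemma HV_zero (n : ℕ) : HV n 0 = 0 := by simp [HV]

lemma HV_top (n : ℕ) : HV n (n+1) = - hh (n+1) := by
  unfold HV
  rw [Nat.sub_self, hh_zero]
  have h1 : ((n:ℝ)+1) ≠ 0 := by positivity
  push_cast
  rw [show 2*((n:ℝ)+1) - 2*(n:ℝ) - 1 = 1 from by ring,
      show 2*(n:ℝ) - 2*((n:ℝ)+1) + 1 = -1 from by ring]
  have hB : ((n:ℝ)+1) * (-1) ≠ 0 := mul_ne_zero h1 (by norm_num)
  rw [div_mul_eq_mul_div, div_eq_iff hB]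
  ring

lemma HV_step (n k : ℕ) (hk : k ≤ n) :
    hh k * hh (n+1-k) - hh k * hh (n-k) = HV n (k+1) - HV n k := by
  have e1 : n + 1 - k = (n - k) + 1 := by omega
  have e2 : n + 1 - (k+1) = n - k := by omega
  have hc : ((n - k : ℕ) : ℝ) = (n:ℝ) - (k:ℝ) := by
    push_cast [hk]; ring
  rw [HV, HV, e1, e2, hh_succ (n-k), hh_succ k, hc]
  have hkn : (k:ℝ) ≤ (n:ℝ) := by exact_mod_cast hk
  have d1 : ((n:ℝ)+1) ≠ 0 := by positivity
  have d2 : 2*(n:ℝ) - 2*(k:ℝ) + 1 ≠ 0 := by intro h; linarith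
  have d3 : (n:ℝ) - (k:ℝ) + 1 ≠ 0 := by intro h; linarith
  have d4 : ((k:ℝ)+1) ≠ 0 := by positivity
  have d5 : 2*(n:ℝ) - 2*((k:ℝ)+1) + 1 ≠ 0 := by
    have := lin_sub_ne n k hk (show (0:ℝ) < 1 by norm_num) (show (1:ℝ) < 2 by norm_num)
    intro h; apply this; linarith
  have d6 : 2*((n:ℝ)-((k:ℝ)+1))+1 ≠ 0 := by intro h; apply d5; linarith
  have d7 : 2*((n:ℝ)-(k:ℝ))+1 ≠ 0 := by intro h; apply d2; linarith
  push_cast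
  field_simp
  ring

noncomputable def HE (m i : ℕ) : ℝ :=
  (i:ℝ)^2 * (2*(i:ℝ) - 2*(m:ℝ) - 1) / (((m:ℝ)+1)^2 * (2*(m:ℝ) - 2*(i:ℝ) + 1)) *
    (hh (m+1-i) * Ac i)

lemma HE_zero (m : ℕ) : HE m 0 = 0 := by simp [HE]

lemma HE_top (m : ℕ) : HE m (m+1) = - Ac (m+1) := by
  unfold HE
  rw [Nat.sub_self, hh_zero]
  have h1 : ((m:ℝ)+1) ≠ 0 := by positivity
  push_cast
  rw [show 2*((m:ℝ)+1) - 2*(m:ℝ) - 1 = 1 from by ring,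
      show 2*(m:ℝ) - 2*((m:ℝ)+1) + 1 = -1 from by ring]
  have hB : ((m:ℝ)+1)^2 * (-1) ≠ 0 := mul_ne_zero (pow_ne_zero 2 h1) (by norm_num)
  rw [div_mul_eq_mul_div, div_eq_iff hB]
  ring

lemma HE_step (m i : ℕ) (hi : i ≤ m) :
    hh (m+1-i) * Ac i
      - (3*(m:ℝ)+2)*(6*(m:ℝ)+5)/(18*((m:ℝ)+1)^2) * (hh (m-i) * Ac i)
      = HE m (i+1) - HE m i := by
  have e1 : m + 1 - i = (m - i) + 1 := by omega
  have e2 : m + 1 - (i+1) = m - i := by omega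
  have hc : ((m - i : ℕ) : ℝ) = (m:ℝ) - (i:ℝ) := by push_cast [hi]; ring
  rw [HE, HE, e1, e2, hh_succ (m-i), Ac_succ i, hc]
  have hkn : (i:ℝ) ≤ (m:ℝ) := by exact_mod_cast hi
  have d1 : ((m:ℝ)+1) ≠ 0 := by positivity
  have d2 : 2*(m:ℝ) - 2*(i:ℝ) + 1 ≠ 0 := by intro h; linarith
  have d3 : (m:ℝ) - (i:ℝ) + 1 ≠ 0 := by intro h; linarith
  have d4 : ((i:ℝ)+1) ≠ 0 := by positivity
  have d5 : 2*(m:ℝ) - 2*((i:ℝ)+1) + 1 ≠ 0 := by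
    have := lin_sub_ne m i hi (show (0:ℝ) < 1 by norm_num) (show (1:ℝ) < 2 by norm_num)
    intro h; apply this; linarith
  have d6 : 2*((m:ℝ)-((i:ℝ)+1))+1 ≠ 0 := by intro h; apply d5; linarith
  have d7 : 2*((m:ℝ)-(i:ℝ))+1 ≠ 0 := by intro h; apply d2; linarith
  push_cast
  field_simp
  ring

/-- numerator polynomial of the Clausen certificate (18 × the rational one) -/
noncomputable def QZ (x y : ℝ) : ℝ :=
  36*y^3 - 72*y^2 + 29*y - 3 + x*(-126*y^2 + 153*y - 30) + x^2*(144*y - 81) - 54*x^3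

noncomputable def HC (n k : ℕ) : ℝ :=
  (k:ℝ)^2 * QZ (n:ℝ) (k:ℝ) /
    (((n:ℝ)+1)^3 * (3*(n:ℝ) - 3*(k:ℝ) + 1) * (6*(n:ℝ) - 6*(k:ℝ) + 1)) *
    (Ac k * Ac (n+1-k))

lemma HC_zero (n : ℕ) : HC n 0 = 0 := by simp [HC]

lemma HC_top (n : ℕ) : HC n (n+1) = - Ac (n+1) := by
  unfold HC
  rw [Nat.sub_self, Ac_zero]
  have h1 : ((n:ℝ)+1) ≠ 0 := by positivity
  push_cast
  rw [show QZ (n:ℝ) ((n:ℝ)+1) = -10*((n:ℝ)+1) from by unfold QZ; ring,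
      show 3*(n:ℝ) - 3*((n:ℝ)+1) + 1 = -2 from by ring,
      show 6*(n:ℝ) - 6*((n:ℝ)+1) + 1 = -5 from by ring]
  have hB : ((n:ℝ)+1)^3 * (-2) * (-5) ≠ 0 :=
    mul_ne_zero (mul_ne_zero (pow_ne_zero 3 h1) (by norm_num)) (by norm_num)
  rw [div_mul_eq_mul_div, div_eq_iff hB]
  ring

lemma HC_step (n k : ℕ) (hk : k ≤ n) :
    Ac k * Ac (n+1-k)
      - (2*(n:ℝ)+1)*(3*(n:ℝ)+1)*(3*(n:ℝ)+2)/(18*((n:ℝ)+1)^3) * (Ac k * Ac (n-k))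
      = HC n (k+1) - HC n k := by
  have e1 : n + 1 - k = (n - k) + 1 := by omega
  have e2 : n + 1 - (k+1) = n - k := by omega
  have hc : ((n - k : ℕ) : ℝ) = (n:ℝ) - (k:ℝ) := by push_cast [hk]; ring
  rw [HC, HC, e1, e2, Ac_succ (n-k), Ac_succ k, hc]
  have hkn : (k:ℝ) ≤ (n:ℝ) := by exact_mod_cast hk
  have d1 : ((n:ℝ)+1) ≠ 0 := by positivity
  have d2 : 3*(n:ℝ) - 3*(k:ℝ) + 1 ≠ 0 := by intro h; linarith
  have d2' : 6*(n:ℝ) - 6*(k:ℝ) + 1 ≠ 0 := by intro h; linarith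
  have d3 : (n:ℝ) - (k:ℝ) + 1 ≠ 0 := by intro h; linarith
  have d4 : ((k:ℝ)+1) ≠ 0 := by positivity
  have d5 : 3*(n:ℝ) - 3*((k:ℝ)+1) + 1 ≠ 0 := by
    have := lin_sub_ne n k hk (show (0:ℝ) < 2 by norm_num) (show (2:ℝ) < 3 by norm_num)
    intro h; apply this; linarith
  have d5' : 6*(n:ℝ) - 6*((k:ℝ)+1) + 1 ≠ 0 := by
    have := lin_sub_ne n k hk (show (0:ℝ) < 5 by norm_num) (show (5:ℝ) < 6 by norm_num)
    intro h; apply this; linarith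
  have d6 : 3*((n:ℝ)-((k:ℝ)+1))+1 ≠ 0 := by intro h; apply d5; linarith
  have d6' : 6*((n:ℝ)-((k:ℝ)+1))+1 ≠ 0 := by intro h; apply d5'; linarith
  have d7 : 3*((n:ℝ)-(k:ℝ))+1 ≠ 0 := by intro h; apply d2; linarith
  have d7' : ((n:ℝ)-(k:ℝ))*6+1 ≠ 0 := by intro h; apply d2'; linarith
  push_cast
  field_simp [QZ]
  unfold QZ
  ring

end WZ
section Sums
open Finset

noncomputable def cc (n : ℕ) : ℝ :=
  (((2*n).choose n : ℝ))^2 * (((3*n).choose n : ℝ)) / 108^n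

lemma cc_zero : cc 0 = 1 := by simp [cc]

lemma cast_choose_two (n : ℕ) : (((2*n).choose n : ℕ) : ℝ)
    = (Nat.factorial (2*n) : ℝ) / ((Nat.factorial n : ℝ) * (Nat.factorial n : ℝ)) := by
  rw [Nat.cast_choose ℝ (by omega : n ≤ 2*n), show 2*n - n = n from by omega]

lemma cast_choose_three (n : ℕ) : (((3*n).choose n : ℕ) : ℝ)
    = (Nat.factorial (3*n) : ℝ) / ((Nat.factorial n : ℝ) * (Nat.factorial (2*n) : ℝ)) := by
  rw [Nat.cast_choose ℝ (by omega : n ≤ 3*n), show 3*n - n = 2*n from by omega]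

lemma fact_ne (n : ℕ) : ((Nat.factorial n : ℕ) : ℝ) ≠ 0 := by
  exact_mod_cast Nat.factorial_ne_zero n

lemma cc_succ (n : ℕ) :
    cc (n+1) = cc n * ((2*(n:ℝ)+1)*(3*(n:ℝ)+1)*(3*(n:ℝ)+2)/(18*((n:ℝ)+1)^3)) := by
  unfold cc
  rw [cast_choose_two (n+1), cast_choose_two n, cast_choose_three (n+1), cast_choose_three n]
  rw [show 2*(n+1) = (2*n+1)+1 from by omega, show 3*(n+1) = ((3*n+1)+1)+1 from by omega]
  rw [Nat.factorial_succ ((3*n+1)+1), Nat.factorial_succ (3*n+1), Nat.factorial_succ (2*n+1),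
      Nat.factorial_succ (2*n), Nat.factorial_succ (3*n), Nat.factorial_succ n]
  have h1 : ((n:ℝ)+1) ≠ 0 := by positivity
  have h2 := fact_ne n
  have h3 := fact_ne (2*n)
  have h4 := fact_ne (3*n)
  have h5 : (108:ℝ)^n ≠ 0 := by positivity
  push_cast
  field_simp
  ring

lemma cc_nonneg (n : ℕ) : 0 ≤ cc n := by unfold cc; positivity

lemma cc_le_one (n : ℕ) : cc n ≤ 1 := by
  induction n with
  | zero => rw [cc_zero]
  | succ n ih =>
    rw [cc_succ]
    have hk : (0:ℝ) ≤ n := Nat.cast_nonneg n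
    have h2 : (2*(n:ℝ)+1)*(3*(n:ℝ)+1)*(3*(n:ℝ)+2)/(18*((n:ℝ)+1)^3) ≤ 1 := by
      rw [div_le_one (by positivity)]; nlinarith
    calc cc n * ((2*(n:ℝ)+1)*(3*(n:ℝ)+1)*(3*(n:ℝ)+2)/(18*((n:ℝ)+1)^3)) ≤ 1 * 1 :=
          mul_le_mul ih h2 (by positivity) (by norm_num)
      _ = 1 := by norm_num

lemma V_sum (n : ℕ) : ∑ k ∈ Finset.range (n+1), hh k * hh (n-k) = 1 := by
  induction n with
  | zero => simp [hh_zero]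
  | succ n ih =>
    rw [Finset.sum_range_succ]
    have step : ∀ k ∈ Finset.range (n+1),
        hh k * hh (n+1-k) = hh k * hh (n-k) + (HV n (k+1) - HV n k) := by
      intro k hk
      have hk' : k ≤ n := by simpa [Nat.lt_succ_iff] using hk
      have := HV_step n k hk'
      linarith
    rw [Finset.sum_congr rfl step, Finset.sum_add_distrib, Finset.sum_range_sub (HV n), ih,
        HV_top, HV_zero, Nat.sub_self, hh_zero]
    ring

lemma C_sum (n : ℕ) : ∑ k ∈ Finset.range (n+1), Ac k * Ac (n-k) = cc n := by
  induction n with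
  | zero => simp [Ac_zero, cc_zero]
  | succ n ih =>
    rw [Finset.sum_range_succ]
    have step : ∀ k ∈ Finset.range (n+1),
        Ac k * Ac (n+1-k)
          = (2*(n:ℝ)+1)*(3*(n:ℝ)+1)*(3*(n:ℝ)+2)/(18*((n:ℝ)+1)^3) * (Ac k * Ac (n-k))
            + (HC n (k+1) - HC n k) := by
      intro k hk
      have hk' : k ≤ n := by simpa [Nat.lt_succ_iff] using hk
      have := HC_step n k hk'
      linarith
    rw [Finset.sum_congr rfl step, Finset.sum_add_distrib, Finset.sum_range_sub (HC n),
        ← Finset.mul_sum, ih, HC_top, HC_zero, cc_succ, Nat.sub_self, Ac_zero]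
    ring

lemma E_sum (m : ℕ) : Bc m = ∑ i ∈ Finset.range (m+1), hh (m-i) * Ac i := by
  induction m with
  | zero => simp [hh_zero, Ac_zero, Bc_zero]
  | succ m ih =>
    rw [Finset.sum_range_succ]
    have step : ∀ i ∈ Finset.range (m+1),
        hh (m+1-i) * Ac i
          = (3*(m:ℝ)+2)*(6*(m:ℝ)+5)/(18*((m:ℝ)+1)^2) * (hh (m-i) * Ac i)
            + (HE m (i+1) - HE m i) := by
      intro i hi
      have hi' : i ≤ m := by simpa [Nat.lt_succ_iff] using hi
      have := HE_step m i hi'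
      linarith
    rw [Finset.sum_congr rfl step, Finset.sum_add_distrib, Finset.sum_range_sub (HE m),
        ← Finset.mul_sum, ← ih, HE_top, HE_zero, Bc_succ, Nat.sub_self, hh_zero]
    ring

end Sums
section Key
open Finset

lemma double_sum (f : ℕ → ℕ → ℝ) (n : ℕ) :
    ∑ k ∈ Finset.range (n+1), ∑ i ∈ Finset.range (n+1-k), f k i
      = ∑ j ∈ Finset.range (n+1), ∑ k ∈ Finset.range (j+1), f k (j-k) := by
  induction n with
  | zero => simp
  | succ n ih =>
    have h1 : ∀ k ∈ Finset.range (n+2), ∑ i ∈ Finset.range (n+2-k), f k i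
        = ∑ i ∈ Finset.range (n+1-k), f k i + f k (n+1-k) := by
      intro k hk
      have hk' : k ≤ n+1 := by simpa [Nat.lt_succ_iff] using hk
      rw [show n+2-k = (n+1-k)+1 from by omega, Finset.sum_range_succ]
    rw [Finset.sum_congr rfl h1, Finset.sum_add_distrib]
    rw [Finset.sum_range_succ (fun k => ∑ i ∈ Finset.range (n+1-k), f k i) (n+1)]
    rw [Finset.sum_range_succ (fun j => ∑ k ∈ Finset.range (j+1), f k (j-k)) (n+1)]
    rw [ih]
    simp [Nat.sub_self]

lemma key (n : ℕ) : S n = ∑ j ∈ Finset.range (n+1), hh (n-j) * cc j := by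
  have e1 : S n = ∑ k ∈ Finset.range (n+1), Ac k * Bc (n-k) := by
    unfold S Ac Bc
    refine Finset.sum_congr rfl fun k _ => by ring
  rw [e1]
  have e2 : ∀ k ∈ Finset.range (n+1), Ac k * Bc (n-k)
      = ∑ i ∈ Finset.range (n+1-k), Ac k * (hh (n-k-i) * Ac i) := by
    intro k hk
    have hk' : k ≤ n := by simpa [Nat.lt_succ_iff] using hk
    rw [E_sum (n-k), Finset.mul_sum, show (n-k)+1 = n+1-k from by omega]
  rw [Finset.sum_congr rfl e2, double_sum (fun k i => Ac k * (hh (n-k-i) * Ac i)) n]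
  refine Finset.sum_congr rfl fun j hj => ?_
  have hj' : j ≤ n := by simpa [Nat.lt_succ_iff] using hj
  have e3 : ∀ k ∈ Finset.range (j+1), Ac k * (hh (n-k-(j-k)) * Ac (j-k))
      = hh (n-j) * (Ac k * Ac (j-k)) := by
    intro k hk
    have hk' : k ≤ j := by simpa [Nat.lt_succ_iff] using hk
    rw [show n-k-(j-k) = n-j from by omega]
    ring
  rw [Finset.sum_congr rfl e3, ← Finset.mul_sum, C_sum j]

end Key

theorem P_closed_form (z : ℝ) (h0 : 0 ≤ z) (h1 : z < 1) :
    HasSum (fun n : ℕ => z ^ n * S n)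
      ((1 - z) ^ (-(1/2 : ℝ)) *
        ∑' n : ℕ, (z / 108) ^ n * (((2 * n).choose n : ℝ) ^ 2 * ((3 * n).choose n : ℝ))) := by
  have h1z : (0:ℝ) < 1 - z := by linarith
  set X := (1 - z) ^ (-(1/2 : ℝ)) with hX
  have hXpos : 0 < X := Real.rpow_pos_of_pos h1z _
  have hgeom : Summable (fun k : ℕ => z^k) := summable_geometric_of_lt_one h0 h1
  have hz1 : Summable (fun k : ℕ => hh k * z^k) := by
    refine Summable.of_nonneg_of_le (fun k => by have := (hh_pos k).le; positivity)
      (fun k => mul_le_of_le_one_left (pow_nonneg h0 k) (hh_le_one k)) hgeom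
  have hz2 : Summable (fun j : ℕ => cc j * z^j) := by
    refine Summable.of_nonneg_of_le (fun j => by have := cc_nonneg j; positivity)
      (fun j => mul_le_of_le_one_left (pow_nonneg h0 j) (cc_le_one j)) hgeom
  have hz1n : Summable (fun k : ℕ => ‖hh k * z^k‖) := by
    refine hz1.congr fun k => ?_
    rw [Real.norm_eq_abs, abs_of_nonneg (by have := (hh_pos k).le; positivity)]
  have hz2n : Summable (fun j : ℕ => ‖cc j * z^j‖) := by
    refine hz2.congr fun j => ?_
    rw [Real.norm_eq_abs, abs_of_nonneg (by have := cc_nonneg j; positivity)]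
  -- the hh-series sums to X
  have hdiag : ∀ n : ℕ, ∑ k ∈ Finset.range (n+1), (hh k * z^k) * (hh (n-k) * z^(n-k)) = z^n := by
    intro n
    have e : ∀ k ∈ Finset.range (n+1),
        (hh k * z^k) * (hh (n-k) * z^(n-k)) = z^n * (hh k * hh (n-k)) := by
      intro k hk
      have hk' : k ≤ n := by simpa [Nat.lt_succ_iff] using hk
      have : z^k * z^(n-k) = z^n := by
        rw [← pow_add]; congr 1; omega
      rw [← this]; ring
    rw [Finset.sum_congr rfl e, ← Finset.mul_sum, V_sum n, mul_one]
  have hsq : (∑' k, hh k * z^k) * (∑' k, hh k * z^k) = (1-z)⁻¹ := by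
    rw [tsum_mul_tsum_eq_tsum_sum_range_of_summable_norm hz1n hz1n, tsum_congr hdiag,
        tsum_geometric_of_lt_one h0 h1]
  have hXsq : X * X = (1-z)⁻¹ := by
    rw [hX, ← Real.rpow_add h1z]
    norm_num
    rw [Real.rpow_neg_one]
  have hFpos : 0 < ∑' k, hh k * z^k := by
    have h01 : hh 0 * z^0 ≤ ∑' k, hh k * z^k :=
      Summable.le_tsum hz1 0 (fun j _ => by have := (hh_pos j).le; positivity)
    simp only [pow_zero, hh_zero, mul_one] at h01
    linarith
  have hFX : (∑' k, hh k * z^k) = X := by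
    nlinarith [hsq, hXsq, hFpos, hXpos]
  have hhs : HasSum (fun k : ℕ => hh k * z^k) X := hFX ▸ hz1.hasSum
  -- rewrite the RHS tsum
  have hccz : ∀ n : ℕ,
      (z / 108) ^ n * (((2 * n).choose n : ℝ) ^ 2 * ((3 * n).choose n : ℝ)) = cc n * z^n := by
    intro n
    unfold cc
    rw [div_pow]
    ring
  rw [tsum_congr hccz, mul_comm]
  -- Cauchy product
  have hsumc : Summable
      (fun n : ℕ => ∑ k ∈ Finset.range (n+1), (cc k * z^k) * (hh (n-k) * z^(n-k))) :=
    (summable_norm_sum_mul_range_of_summable_norm hz2n hz1n).of_norm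
  have htsum : (∑' n : ℕ, ∑ k ∈ Finset.range (n+1), (cc k * z^k) * (hh (n-k) * z^(n-k)))
      = (∑' j, cc j * z^j) * X := by
    rw [← hhs.tsum_eq]
    exact (tsum_mul_tsum_eq_tsum_sum_range_of_summable_norm hz2n hz1n).symm
  have hfin : HasSum
      (fun n : ℕ => ∑ k ∈ Finset.range (n+1), (cc k * z^k) * (hh (n-k) * z^(n-k)))
      ((∑' j, cc j * z^j) * X) := htsum ▸ hsumc.hasSum
  have hfun : (fun n : ℕ => z ^ n * S n)
      = fun n : ℕ => ∑ k ∈ Finset.range (n+1), (cc k * z^k) * (hh (n-k) * z^(n-k)) := by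
    funext n
    rw [key n, Finset.mul_sum]
    refine Finset.sum_congr rfl fun j hj => ?_
    have hj' : j ≤ n := by simpa [Nat.lt_succ_iff] using hj
    have : z^j * z^(n-j) = z^n := by rw [← pow_add]; congr 1; omega
    rw [← this]; ring
  rw [hfun]
  exact hfin
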